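/- Let N ≥ 2 and let Γ be the path algebra of the quiver with vertices 1,…,N, degree-1 arrows xᵢ: i → i+1, xᵢ*: i+1 → i (1 ≤ i ≤ N−1) and degree-N arrows yᵢ: i → N+1−i (1 ≤ i ≤ N), modulo the relations (a) x₁x₁* = x_{N-1}*x_{N-1} = 0, (b) xᵢ*xᵢ = x_{i+1}x_{i+1}*, (c) xᵢ y_{i+1} = yᵢ x_{N-i}*, (d) xᵢ* yᵢ = y_{i+1} x_{N-i}. Then every element of e_i Γ e_j homogeneous of degree k can be written as yᵢᵃ·γ₁·γ₂ where a ∈ {0,1}, γ₁ is a product of xₗ's and xₗ*'s only, and γ₂ is a product of yₗ's forming a loop at j (of degree a multiple of 2N). -/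

import Mathlib

/-! The graded path algebra `Γ` of the quiver with vertices `1, …, N`, degree-1 arrows
`xᵢ : i → i+1`, `xᵢ* : i+1 → i` and degree-`N` arrows `yᵢ : i → N+1−i`, modulo
(a) `x₁x₁* = x_{N-1}*x_{N-1} = 0`, (b) `xᵢ*xᵢ = x_{i+1}x_{i+1}*`,
(c) `xᵢ y_{i+1} = yᵢ x_{N-i}*`, (d) `xᵢ* yᵢ = y_{i+1} x_{N-i}`
(concatenation-of-paths convention). -/

/-- A step of a path: `up` is some `x`, `down` is some `x*`, `flip` is some `y`. -/
inductive BStep : Type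
  | up : BStep
  | down : BStep
  | flip : BStep
deriving DecidableEq

/-- The endpoint of a single step starting at vertex `v`. -/
def stepNext (N : ℕ) (v : ℤ) : BStep → ℤ
  | BStep.up => v + 1
  | BStep.down => v - 1
  | BStep.flip => (N : ℤ) + 1 - v

/-- The degree of a step: `x` and `x*` have degree `1`, `y` has degree `N`. -/
def stepDeg (N : ℕ) : BStep → ℕ
  | BStep.up => 1
  | BStep.down => 1
  | BStep.flip => N

/-- All vertices visited lie in `{1, …, N}`. -/
def okStepsY (N : ℕ) : ℤ → List BStep → Prop
  | i, [] => 1 ≤ i ∧ i ≤ (N : ℤ)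
  | i, b :: L => 1 ≤ i ∧ i ≤ (N : ℤ) ∧ okStepsY N (stepNext N i b) L

/-- The endpoint of the step list `L` starting at `i`. -/
def targetY (N : ℕ) : ℤ → List BStep → ℤ
  | i, [] => i
  | i, b :: L => targetY N (stepNext N i b) L

/-- The total degree of a step list. -/
def degY (N : ℕ) (L : List BStep) : ℕ := (L.map (stepDeg N)).sum

/-- `L` encodes a path from `i` to `j` of total degree `k`. -/
def IsPathFromY (N : ℕ) (i j : ℤ) (k : ℕ) (L : List BStep) : Prop :=
  okStepsY N i L ∧ targetY N i L = j ∧ degY N L = k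

/-- The set of paths from `i` to `j` of degree `k`. -/
def PathIdxY (N : ℕ) (i j : ℤ) (k : ℕ) : Type :=
  {L : List BStep // IsPathFromY N i j k L}

/-- The relators spanning the degree-`k`, `(i,j)`-component of the ideal generated by
the relations (a)–(d) inside `e_i (FQ)_k e_j`. -/
def relatorsY (F : Type*) [Field F] (N : ℕ) (i j : ℤ) (k : ℕ) :
    Set (PathIdxY N i j k →₀ F) :=
  {v | ∃ A B : List BStep,
    -- (a) `x₁x₁* = 0`
    (∃ h : IsPathFromY N i j k (A ++ [BStep.up, BStep.down] ++ B),
      targetY N i A = 1 ∧ v = Finsupp.single ⟨A ++ [BStep.up, BStep.down] ++ B, h⟩ 1) ∨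
    -- (a) `x_{N-1}*x_{N-1} = 0`
    (∃ h : IsPathFromY N i j k (A ++ [BStep.down, BStep.up] ++ B),
      targetY N i A = (N : ℤ) ∧
      v = Finsupp.single ⟨A ++ [BStep.down, BStep.up] ++ B, h⟩ 1) ∨
    -- (b) `xᵢ*xᵢ = x_{i+1}x_{i+1}*` at an interior vertex
    (∃ (h1 : IsPathFromY N i j k (A ++ [BStep.down, BStep.up] ++ B))
        (h2 : IsPathFromY N i j k (A ++ [BStep.up, BStep.down] ++ B)),
      2 ≤ targetY N i A ∧ targetY N i A ≤ (N : ℤ) - 1 ∧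
      v = Finsupp.single ⟨A ++ [BStep.down, BStep.up] ++ B, h1⟩ 1
          - Finsupp.single ⟨A ++ [BStep.up, BStep.down] ++ B, h2⟩ 1) ∨
    -- (c) `xᵢ y_{i+1} = yᵢ x_{N-i}*`
    (∃ (h1 : IsPathFromY N i j k (A ++ [BStep.up, BStep.flip] ++ B))
        (h2 : IsPathFromY N i j k (A ++ [BStep.flip, BStep.down] ++ B)),
      1 ≤ targetY N i A ∧ targetY N i A ≤ (N : ℤ) - 1 ∧
      v = Finsupp.single ⟨A ++ [BStep.up, BStep.flip] ++ B, h1⟩ 1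
          - Finsupp.single ⟨A ++ [BStep.flip, BStep.down] ++ B, h2⟩ 1) ∨
    -- (d) `xᵢ* yᵢ = y_{i+1} x_{N-i}`
    (∃ (h1 : IsPathFromY N i j k (A ++ [BStep.down, BStep.flip] ++ B))
        (h2 : IsPathFromY N i j k (A ++ [BStep.flip, BStep.up] ++ B)),
      2 ≤ targetY N i A ∧ targetY N i A ≤ (N : ℤ) ∧
      v = Finsupp.single ⟨A ++ [BStep.down, BStep.flip] ++ B, h1⟩ 1
          - Finsupp.single ⟨A ++ [BStep.flip, BStep.up] ++ B, h2⟩ 1)}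

/-- The component `e_i Γ_k e_j` of the quotient graded path algebra `Γ = FQ/⟨I⟩`. -/
def PathCompY (F : Type*) [Field F] (N : ℕ) (i j : ℤ) (k : ℕ) :=
  (PathIdxY N i j k →₀ F) ⧸ Submodule.span F (relatorsY F N i j k)

noncomputable instance (F : Type*) [Field F] (N : ℕ) (i j : ℤ) (k : ℕ) :
    AddCommGroup (PathCompY F N i j k) :=
  Submodule.Quotient.addCommGroup _

noncomputable instance (F : Type*) [Field F] (N : ℕ) (i j : ℤ) (k : ℕ) :
    Module F (PathCompY F N i j k) :=
  Submodule.Quotient.module _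

/-- The class of a path in `e_i Γ_k e_j`. -/
noncomputable def pathClassY (F : Type*) [Field F] {N : ℕ} {i j : ℤ} {k : ℕ}
    (p : PathIdxY N i j k) : PathCompY F N i j k :=
  Submodule.Quotient.mk (Finsupp.single p 1)

/-- Normal form `yᵢᵃ · γ₁ · γ₂`: an optional initial `y`, then a product of `x`'s and
`x*`'s only, then a loop of `y`'s of degree a multiple of `2N`. -/
def NormalFormY (L : List BStep) : Prop :=
  ∃ (a : Bool) (M : List BStep) (t : ℕ),
    L = (cond a [BStep.flip] []) ++ M ++ List.replicate (2 * t) BStep.flip ∧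
      ∀ s ∈ M, s ≠ BStep.flip

/-! Relations (c) and (d) let a `y` move across an `x` or `x*`, turning it into its dual, and
a word containing one side of such a relation is a path exactly when the word with the other
side is. A path is normalised by induction on its length, prepending one letter to a normal
form `yᵃ γ₁ y²ᵗ`: an `x` or `x*` in front of a leading `y` passes through it; a `y` becomes
the leading one or, if there already is one, the pair `y y` passes through `γ₁`, which the
double dualisation restores, and joins the trailing `y`'s. -/

namespace BStep

def dual : BStep → BStep
  | up => down
  | down => up
  | flip => flip

@[simp]
lemma dual_dual (s : BStep) : s.dual.dual = s := by
  cases s <;> rfl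

lemma dual_ne_flip {s : BStep} (h : s ≠ flip) : s.dual ≠ flip := by
  cases s <;> simp_all [dual]

end BStep

section Paths

variable {N : ℕ}

lemma okStepsY.bounds {i : ℤ} {L : List BStep} (h : okStepsY N i L) :
    1 ≤ i ∧ i ≤ (N : ℤ) := by
  cases L with
  | nil => exact h
  | cons _ _ => exact ⟨h.1, h.2.1⟩

lemma targetY_append (i : ℤ) (A B : List BStep) :
    targetY N i (A ++ B) = targetY N (targetY N i A) B := by
  induction A generalizing i with
  | nil => rfl
  | cons a A ih => exact ih _

lemma okStepsY_append (i : ℤ) (A B : List BStep) :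
    okStepsY N i (A ++ B) ↔ okStepsY N i A ∧ okStepsY N (targetY N i A) B := by
  induction A generalizing i with
  | nil => exact ⟨fun h => ⟨h.bounds, h⟩, And.right⟩
  | cons a A ih =>
    simp only [List.cons_append, okStepsY, targetY, ih]
    tauto

lemma degY_append (A B : List BStep) : degY N (A ++ B) = degY N A + degY N B := by
  simp [degY]

lemma okStepsY.of_middle {i : ℤ} {A u B : List BStep} (h : okStepsY N i (A ++ u ++ B)) :
    okStepsY N (targetY N i A) u := by
  rw [List.append_assoc, okStepsY_append, okStepsY_append] at h
  exact h.2.1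

lemma isPathFromY_middle_iff {u w : List BStep} (hok : ∀ v, okStepsY N v u ↔ okStepsY N v w)
    (htarget : ∀ v, targetY N v u = targetY N v w) (hdeg : degY N u = degY N w)
    (i j : ℤ) (k : ℕ) (A B : List BStep) :
    IsPathFromY N i j k (A ++ u ++ B) ↔ IsPathFromY N i j k (A ++ w ++ B) := by
  simp only [IsPathFromY, List.append_assoc, okStepsY_append, targetY_append, degY_append,
    hok, htarget, hdeg]

end Paths

open Classical in
/-- The class of a word in the steps; words that are not paths from `i` to `j` of degree `k`
are sent to `0`, so that rewriting a word needs no side condition. -/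
noncomputable def listClass (F : Type*) [Field F] (N : ℕ) (i j : ℤ) (k : ℕ) (L : List BStep) :
    PathCompY F N i j k :=
  if h : IsPathFromY N i j k L then pathClassY F ⟨L, h⟩ else 0

def Interchangeable (F : Type*) [Field F] (N : ℕ) (u w : List BStep) : Prop :=
  ∀ (i j : ℤ) (k : ℕ) (A B : List BStep),
    listClass F N i j k (A ++ u ++ B) = listClass F N i j k (A ++ w ++ B)

namespace Interchangeable

variable {F : Type*} [Field F] {N : ℕ} {u v w : List BStep}

lemma refl (u : List BStep) : Interchangeable F N u u := fun _ _ _ _ _ => rfl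

lemma symm (h : Interchangeable F N u w) : Interchangeable F N w u :=
  fun i j k A B => (h i j k A B).symm

lemma trans (h₁ : Interchangeable F N u v) (h₂ : Interchangeable F N v w) :
    Interchangeable F N u w :=
  fun i j k A B => (h₁ i j k A B).trans (h₂ i j k A B)

lemma append_append (h : Interchangeable F N u w) (C D : List BStep) :
    Interchangeable F N (C ++ u ++ D) (C ++ w ++ D) := by
  intro i j k A B
  simpa only [List.append_assoc] using h i j k (A ++ C) (D ++ B)

lemma cons (h : Interchangeable F N u w) (s : BStep) :
    Interchangeable F N (s :: u) (s :: w) := by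
  simpa using h.append_append [s] []

end Interchangeable

lemma interchangeable_of_relator {F : Type*} [Field F] {N : ℕ} {u w : List BStep}
    (hok : ∀ v, okStepsY N v u ↔ okStepsY N v w) (htarget : ∀ v, targetY N v u = targetY N v w)
    (hdeg : degY N u = degY N w)
    (hrel : ∀ (i j : ℤ) (k : ℕ) (A B : List BStep) (hu : IsPathFromY N i j k (A ++ u ++ B))
      (hw : IsPathFromY N i j k (A ++ w ++ B)),
      Finsupp.single ⟨_, hu⟩ 1 - Finsupp.single ⟨_, hw⟩ 1 ∈ relatorsY F N i j k) :
    Interchangeable F N u w := by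
  intro i j k A B
  have hiff := isPathFromY_middle_iff hok htarget hdeg i j k A B
  by_cases hu : IsPathFromY N i j k (A ++ u ++ B)
  · rw [listClass, listClass, dif_pos hu, dif_pos (hiff.1 hu)]
    exact (Submodule.Quotient.eq _).2 (Submodule.subset_span (hrel i j k A B hu (hiff.1 hu)))
  · rw [listClass, listClass, dif_neg hu, dif_neg (mt hiff.2 hu)]

lemma interchangeable_up_flip (F : Type*) [Field F] (N : ℕ) :
    Interchangeable F N [.up, .flip] [.flip, .down] := by
  refine interchangeable_of_relator (fun v => ?_) (fun v => ?_) ?_ ?_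
  · simp only [okStepsY, stepNext]
    omega
  · simp only [targetY, stepNext]
    ring
  · simp [degY, stepDeg, add_comm]
  · intro i j k A B hu hw
    have hv := hu.1.of_middle
    simp only [okStepsY, stepNext] at hv
    -- relation (c)
    exact ⟨A, B, .inr <| .inr <| .inr <| .inl ⟨hu, hw, by omega, by omega, rfl⟩⟩

lemma interchangeable_down_flip (F : Type*) [Field F] (N : ℕ) :
    Interchangeable F N [.down, .flip] [.flip, .up] := by
  refine interchangeable_of_relator (fun v => ?_) (fun v => ?_) ?_ ?_
  · simp only [okStepsY, stepNext]
    omega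
  · simp only [targetY, stepNext]
    ring
  · simp [degY, stepDeg, add_comm]
  · intro i j k A B hu hw
    have hv := hu.1.of_middle
    simp only [okStepsY, stepNext] at hv
    -- relation (d)
    exact ⟨A, B, .inr <| .inr <| .inr <| .inr ⟨hu, hw, by omega, by omega, rfl⟩⟩

section Normalization

variable (F : Type*) [Field F] (N : ℕ)

lemma interchangeable_cons_flip {s : BStep} (hs : s ≠ .flip) :
    Interchangeable F N [s, .flip] [.flip, s.dual] := by
  cases s with
  | up => exact interchangeable_up_flip F N
  | down => exact interchangeable_down_flip F N
  | flip => exact absurd rfl hs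

lemma interchangeable_flip_cons {s : BStep} (hs : s ≠ .flip) :
    Interchangeable F N [.flip, s] [s.dual, .flip] := by
  simpa using (interchangeable_cons_flip F N (BStep.dual_ne_flip hs)).symm

lemma interchangeable_flip_cons_append {M : List BStep} (hM : ∀ s ∈ M, s ≠ .flip) :
    Interchangeable F N (.flip :: M) (M.map BStep.dual ++ [.flip]) := by
  induction M with
  | nil => exact Interchangeable.refl _
  | cons s M ih =>
    rw [List.forall_mem_cons] at hM
    have hswap : Interchangeable F N (.flip :: s :: M) (s.dual :: .flip :: M) := by
      simpa using (interchangeable_flip_cons F N hM.1).append_append [] M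
    simpa using hswap.trans ((ih hM.2).cons s.dual)

lemma interchangeable_flip_flip_cons {M : List BStep} (hM : ∀ s ∈ M, s ≠ .flip) :
    Interchangeable F N (.flip :: .flip :: M) (M ++ [.flip, .flip]) := by
  have hM' : ∀ s ∈ M.map BStep.dual, s ≠ .flip := by
    simpa only [List.forall_mem_map] using fun s hs => BStep.dual_ne_flip (hM s hs)
  have h₁ := (interchangeable_flip_cons_append F N hM).cons .flip
  have h₂ := (interchangeable_flip_cons_append F N hM').append_append [] [.flip]
  simpa [List.map_map, Function.comp_def] using h₁.trans h₂

lemma exists_normalFormY_interchangeable (L : List BStep) :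
    ∃ L', NormalFormY L' ∧ Interchangeable F N L L' := by
  induction L with
  | nil => exact ⟨[], ⟨false, [], 0, rfl, by simp⟩, Interchangeable.refl _⟩
  | cons s L ih =>
    obtain ⟨_, ⟨a, M, t, rfl, hM⟩, hL⟩ := ih
    have hsL := hL.cons s
    cases a <;> simp only [cond_false, cond_true, List.nil_append, List.cons_append] at hsL <;>
      by_cases hs : s = .flip
    · subst hs
      exact ⟨_, ⟨true, M, t, rfl, hM⟩, hsL⟩
    · exact ⟨_, ⟨false, s :: M, t, rfl, List.forall_mem_cons.2 ⟨hs, hM⟩⟩, hsL⟩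
    · subst hs
      have h := (interchangeable_flip_flip_cons F N hM).append_append []
        (List.replicate (2 * t) .flip)
      refine ⟨M ++ List.replicate (2 * (t + 1)) .flip, ⟨false, M, t + 1, rfl, hM⟩, ?_⟩
      rw [show 2 * (t + 1) = 2 + 2 * t by ring]
      simpa [List.replicate_add] using hsL.trans h
    · have h := (interchangeable_cons_flip F N hs).append_append []
        (M ++ List.replicate (2 * t) .flip)
      simp only [List.nil_append, List.cons_append] at h
      exact ⟨_, ⟨true, s.dual :: M, t, rfl, List.forall_mem_cons.2 ⟨BStep.dual_ne_flip hs, hM⟩⟩,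
        hsL.trans h⟩

end Normalization

lemma listClass_mem_span_normalFormY (F : Type*) [Field F] (N : ℕ) (i j : ℤ) (k : ℕ)
    (L : List BStep) :
    listClass F N i j k L ∈ Submodule.span F
      {y : PathCompY F N i j k | ∃ p : PathIdxY N i j k, NormalFormY p.1 ∧ y = pathClassY F p} := by
  obtain ⟨L', hL', hLL'⟩ := exists_normalFormY_interchangeable F N L
  have hclass : listClass F N i j k L = listClass F N i j k L' := by
    simpa using hLL' i j k [] []
  rw [hclass, listClass]
  split_ifs with h
  · exact Submodule.subset_span ⟨⟨L', h⟩, hL', rfl⟩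
  · exact Submodule.zero_mem _

theorem stmt11_general (F : Type*) [Field F] (N : ℕ) (i j : ℤ) (k : ℕ)
    (x : PathCompY F N i j k) :
    x ∈ Submodule.span F
      {y : PathCompY F N i j k |
        ∃ p : PathIdxY N i j k, NormalFormY p.1 ∧ y = pathClassY F p} := by
  obtain ⟨f, rfl⟩ := Submodule.Quotient.mk_surjective _ x
  induction f using Finsupp.induction_linear with
  | zero => exact Submodule.zero_mem _
  | add f g hf hg => exact Submodule.add_mem _ hf hg
  | single p b =>
    have hp : pathClassY F p = listClass F N i j k p.1 := by rw [listClass, dif_pos p.2]; rfl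
    rw [← mul_one b, ← Finsupp.smul_single']
    exact Submodule.smul_mem _ b (hp ▸ listClass_mem_span_normalFormY F N i j k p.1)

/-- Every element of `e_i Γ e_j` homogeneous of degree `k` is a linear combination of
paths in normal form `yᵢᵃ · γ₁ · γ₂`. -/
theorem stmt11 (F : Type*) [Field F] (N : ℕ) (hN : 2 ≤ N) (i j : ℤ)
    (hi : 1 ≤ i) (hiN : i ≤ (N : ℤ)) (hj : 1 ≤ j) (hjN : j ≤ (N : ℤ)) (k : ℕ)
    (x : PathCompY F N i j k) :
    x ∈ Submodule.span F
      {y : PathCompY F N i j k |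
        ∃ p : PathIdxY N i j k, NormalFormY p.1 ∧ y = pathClassY F p} :=
  stmt11_general F N i j k x
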